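/- arXiv:1904.02291 — 2 statements merged into one kernel-verified Lean document; each statement's English description precedes it below -/
import Mathlib

section
/- For every positive integer n, every x ∈ [0,1), and every p ∈ [0,1], Σ_{i=0}^{n} P(B_{n,p} = i)^{1-x} · P(B_{n,i/n} = i)^{x} ≤ 1/(1 - x), where B_{n,q} ~ Binomial(n, q). -/
open Real Finset MeasureTheory

noncomputable def klBin (q p : ℝ) : ℝ :=
  q * Real.log (q / p) + (1 - q) * Real.log ((1 - q) / (1 - p))

noncomputable def klVec {k : ℕ} (q p : Fin k → ℝ) : ℝ :=
  ∑ i, q i * Real.log (q i / p i)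

noncomputable def binomPMF (n : ℕ) (p : ℝ) (i : ℕ) : ℝ :=
  (n.choose i : ℝ) * p ^ i * (1 - p) ^ (n - i)

def multSupport (n k : ℕ) : Finset (Fin k → ℕ) :=
  (Fintype.piFinset fun _ => Finset.range (n + 1)).filter fun x => ∑ i, x i = n

noncomputable def multPMF (n : ℕ) {k : ℕ} (p : Fin k → ℝ) (x : Fin k → ℕ) : ℝ :=
  ((n.factorial : ℝ) / ∏ i, ((x i).factorial : ℝ)) * ∏ i, p i ^ x i

/-!
Weighted AM-GM bounds each summand by a binomial probability at the interpolated parameter,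
`P(B_{n,p} = i)^(1-x) * P(B_{n,i/n} = i)^x ≤ P(B_{n,q_i} = i)` with `q_i = a + i h`, where
`a = (1 - x) p`, `b = (1 - x) (1 - p)`, `h = x / n`, so that `1 - q_i = b + (n - i) h`.
The resulting sum `∑ C(n,i) (a + i h)^i (b + (n - i) h)^(n - i)` is evaluated by Abel's identity as
`∑ₛ n (n - 1) ⋯ (n - s + 1) h^s (a + b + n h)^(n - s) = ∑ₛ n (n - 1) ⋯ (n - s + 1) (x / n)^s`,
which is at most `∑ₛ x^s ≤ 1 / (1 - x)`.
-/

open scoped Nat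

theorem sum_alternating_choose_mul_add_mul_pow (a h : ℝ) (n : ℕ) :
    ∑ k ∈ range (n + 1), (-1 : ℝ) ^ (n - k) * n.choose k * (a + k * h) ^ n = n ! * h ^ n := by
  -- The left side is the `n`-th forward difference of `r ↦ (a + r h)^n`; only `h^n r^n` survives.
  have hsplit : (fun r : ℝ ↦ (a + r * h) ^ n) = h ^ n • (fun r : ℝ ↦ r ^ n) +
      fun r ↦ ∑ j ∈ range n, (a ^ (n - j) * h ^ j * n.choose j) * r ^ j := by
    ext r
    rw [add_comm a, add_pow, sum_range_succ, add_comm]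
    simp only [Pi.add_apply, Pi.smul_apply, smul_eq_mul, Nat.sub_self, pow_zero,
      Nat.choose_self, Nat.cast_one, mul_one, mul_pow]
    exact congr_arg₂ _ (mul_comm _ _) (sum_congr rfl fun j _ ↦ by ring)
  have := fwdDiff_iter_eq_sum_shift 1 (fun r : ℝ ↦ (a + r * h) ^ n) n 0
  rw [hsplit, fwdDiff_iter_add, fwdDiff_iter_const_smul, fwdDiff_iter_eq_factorial,
    fwdDiff_iter_sum_mul_pow_eq_zero] at this
  simpa [zsmul_eq_mul, mul_comm] using this.symm

noncomputable def abelSum (h a : ℝ) (n : ℕ) (b : ℝ) : ℝ :=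
  ∑ k ∈ range (n + 1), (n.choose k : ℝ) * (a + k * h) ^ k * (b + (n - k : ℕ) * h) ^ (n - k)

noncomputable def descFactorialSum (h : ℝ) (n : ℕ) (c : ℝ) : ℝ :=
  ∑ s ∈ range (n + 1), (n.descFactorial s : ℝ) * h ^ s * (c + n * h) ^ (n - s)

theorem hasDerivAt_const_mul_add_pow (c d y : ℝ) (m : ℕ) :
    HasDerivAt (fun z ↦ c * (z + d) ^ m) (c * m * (y + d) ^ (m - 1)) y := by
  simpa [mul_assoc] using ((hasDerivAt_id y).add_const d).pow m |>.const_mul c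

theorem hasDerivAt_abelSum (h a b : ℝ) (n : ℕ) :
    HasDerivAt (abelSum h a (n + 1)) ((n + 1) * abelSum h a n (b + h)) b := by
  refine (HasDerivAt.fun_sum fun k _ ↦ hasDerivAt_const_mul_add_pow
    ((n + 1).choose k * (a + k * h) ^ k) ((n + 1 - k : ℕ) * h) b (n + 1 - k)).congr_deriv ?_
  rw [abelSum, mul_sum, sum_range_succ _ (n + 1)]
  simp only [Nat.sub_self, Nat.cast_zero, mul_zero, zero_mul, add_zero]
  refine sum_congr rfl fun k hk ↦ ?_
  have hk : k ≤ n := Nat.lt_succ_iff.mp (mem_range.mp hk)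
  have hchoose : (n.choose k : ℝ) * (n + 1) = (n + 1).choose k * (n + 1 - k : ℕ) := by
    exact_mod_cast Nat.choose_mul_succ_eq n k
  rw [Nat.succ_sub hk] at hchoose ⊢
  rw [Nat.succ_sub_one]
  push_cast at hchoose ⊢
  linear_combination -(a + k * h) ^ k * (b + h + (n - k : ℕ) * h) ^ (n - k) * hchoose

theorem hasDerivAt_descFactorialSum (h c : ℝ) (n : ℕ) :
    HasDerivAt (descFactorialSum h (n + 1)) ((n + 1) * descFactorialSum h n (c + h)) c := by
  refine (HasDerivAt.fun_sum fun s _ ↦ hasDerivAt_const_mul_add_pow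
    ((n + 1).descFactorial s * h ^ s) ((n + 1 : ℕ) * h) c (n + 1 - s)).congr_deriv ?_
  rw [descFactorialSum, mul_sum, sum_range_succ _ (n + 1)]
  simp only [Nat.sub_self, Nat.cast_zero, mul_zero, zero_mul, add_zero]
  refine sum_congr rfl fun s hs ↦ ?_
  have hs : s ≤ n := Nat.lt_succ_iff.mp (mem_range.mp hs)
  have hdesc : ((n + 1 - s : ℕ) : ℝ) * (n + 1).descFactorial s = (n + 1) * n.descFactorial s := by
    exact_mod_cast Nat.succ_descFactorial n s
  rw [Nat.succ_sub hs] at hdesc ⊢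
  rw [Nat.succ_sub_one]
  push_cast at hdesc ⊢
  linear_combination h ^ s * (c + h + n * h) ^ (n - s) * hdesc

theorem abelSum_neg_add_mul (h a : ℝ) (n : ℕ) : abelSum h a n (-(a + n * h)) = n ! * h ^ n := by
  rw [abelSum, ← sum_alternating_choose_mul_add_mul_pow a h n]
  refine sum_congr rfl fun k hk ↦ ?_
  have hk : k ≤ n := Nat.lt_succ_iff.mp (mem_range.mp hk)
  have hbase : -(a + n * h) + (n - k : ℕ) * h = -(a + k * h) := by
    rw [Nat.cast_sub hk]; ring
  rw [hbase, neg_pow, ← pow_mul_pow_sub (a + k * h) hk]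
  ring

theorem descFactorialSum_neg_mul (h : ℝ) (n : ℕ) : descFactorialSum h n (-(n * h)) = n ! * h ^ n := by
  rw [descFactorialSum, neg_add_cancel, sum_range_succ, Nat.sub_self, pow_zero, mul_one,
    Nat.descFactorial_self, sum_eq_zero fun s hs ↦ ?_, zero_add]
  rw [zero_pow (Nat.sub_ne_zero_of_lt (mem_range.mp hs)), mul_zero]

/- Both sides, as functions of `b`, satisfy `F (n + 1)' = (n + 1) * F n (· + h)`, and they agree at
`b = -(a + (n + 1) * h)`, where the left side becomes an `(n + 1)`-st finite difference of `y ^ (n + 1)`. -/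
theorem abelSum_eq_descFactorialSum (h a : ℝ) (n : ℕ) (b : ℝ) :
    abelSum h a n b = descFactorialSum h n (a + b) := by
  induction n generalizing b with
  | zero => simp [abelSum, descFactorialSum]
  | succ n ih =>
    have hderiv (y : ℝ) :
        HasDerivAt (fun y ↦ abelSum h a (n + 1) y - descFactorialSum h (n + 1) (a + y)) 0 y := by
      have := (hasDerivAt_abelSum h a y n).sub
        ((hasDerivAt_descFactorialSum h (a + y) n).comp_const_add a y)
      rwa [ih, ← add_assoc, sub_self] at this
    have hconst := is_const_of_deriv_eq_zero (fun y ↦ (hderiv y).differentiableAt)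
      (fun y ↦ (hderiv y).deriv) b (-(a + (n + 1 : ℕ) * h))
    have hb0 : a + -(a + (n + 1 : ℕ) * h) = -((n + 1 : ℕ) * h) := by ring
    rw [hb0, abelSum_neg_add_mul, descFactorialSum_neg_mul, sub_self] at hconst
    exact sub_eq_zero.mp hconst

theorem binomPMF_rpow {n : ℕ} {r : ℝ} (hr0 : 0 ≤ r) (hr1 : r ≤ 1) (i : ℕ) (w : ℝ) :
    binomPMF n r i ^ w = (n.choose i : ℝ) ^ w * (r ^ w) ^ i * ((1 - r) ^ w) ^ (n - i) := by
  have hr1' : 0 ≤ 1 - r := sub_nonneg.mpr hr1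
  rw [binomPMF, Real.mul_rpow (by positivity) (by positivity), Real.mul_rpow (by positivity)
    (by positivity), Real.rpow_pow_comm hr0, Real.rpow_pow_comm hr1']

theorem binomPMF_rpow_mul_rpow_le {w₁ w₂ p q : ℝ} (hw₁ : 0 ≤ w₁) (hw₂ : 0 ≤ w₂)
    (hw : w₁ + w₂ = 1) (hp0 : 0 ≤ p) (hp1 : p ≤ 1) (hq0 : 0 ≤ q) (hq1 : q ≤ 1) (n i : ℕ) :
    binomPMF n p i ^ w₁ * binomPMF n q i ^ w₂ ≤ binomPMF n (w₁ * p + w₂ * q) i := by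
  have hchoose : (n.choose i : ℝ) ^ w₁ * (n.choose i : ℝ) ^ w₂ = n.choose i := by
    rw [← Real.rpow_add' (by positivity) (by rw [hw]; exact one_ne_zero), hw, Real.rpow_one]
  have hsuccess : p ^ w₁ * q ^ w₂ ≤ w₁ * p + w₂ * q :=
    Real.geom_mean_le_arith_mean2_weighted hw₁ hw₂ hp0 hq0 hw
  have hfailure : (1 - p) ^ w₁ * (1 - q) ^ w₂ ≤ 1 - (w₁ * p + w₂ * q) := by
    rw [show 1 - (w₁ * p + w₂ * q) = w₁ * (1 - p) + w₂ * (1 - q) by linear_combination -hw]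
    exact Real.geom_mean_le_arith_mean2_weighted hw₁ hw₂ (sub_nonneg.mpr hp1) (sub_nonneg.mpr hq1) hw
  calc binomPMF n p i ^ w₁ * binomPMF n q i ^ w₂
      = (n.choose i : ℝ) ^ w₁ * (n.choose i : ℝ) ^ w₂ * (p ^ w₁ * q ^ w₂) ^ i
          * ((1 - p) ^ w₁ * (1 - q) ^ w₂) ^ (n - i) := by
        rw [binomPMF_rpow hp0 hp1, binomPMF_rpow hq0 hq1]; ring
    _ ≤ binomPMF n (w₁ * p + w₂ * q) i := by
        have h1p := sub_nonneg.mpr hp1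
        have h1q := sub_nonneg.mpr hq1
        rw [hchoose, binomPMF]
        gcongr

theorem sum_binomPMF_eq_abelSum {a b h : ℝ} {n : ℕ} (habh : a + b + n * h = 1) :
    ∑ i ∈ range (n + 1), binomPMF n (a + i * h) i = abelSum h a n b := by
  refine sum_congr rfl fun i hi ↦ ?_
  have hi : i ≤ n := Nat.lt_succ_iff.mp (mem_range.mp hi)
  rw [binomPMF, Nat.cast_sub hi, show 1 - (a + i * h) = b + (n - i) * h by linear_combination -habh]

theorem descFactorialSum_div_le {n : ℕ} (hn : n ≠ 0) {x : ℝ} (hx0 : 0 ≤ x) (hx1 : x < 1) :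
    descFactorialSum (x / n) n (1 - x) ≤ 1 / (1 - x) := by
  have hn' : (0 : ℝ) < n := by positivity
  have hone : 1 - x + n * (x / n) = 1 := by field_simp; ring
  calc descFactorialSum (x / n) n (1 - x)
      ≤ ∑ s ∈ range (n + 1), x ^ s := by
        rw [descFactorialSum, hone]
        refine sum_le_sum fun s _ ↦ ?_
        have : (n.descFactorial s : ℝ) ≤ (n : ℝ) ^ s := by
          exact_mod_cast Nat.descFactorial_le_pow n s
        rw [one_pow, mul_one, div_pow, mul_div_left_comm]
        exact mul_le_of_le_one_right (by positivity) ((div_le_one (by positivity)).mpr this)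
    _ ≤ 1 / (1 - x) := by
        have := geom_sum_Ico_le_of_lt_one (m := 0) (n := n + 1) hx0 hx1
        rwa [← range_eq_Ico, pow_zero] at this

theorem binomial_interp_sum_le (n : ℕ) (hn : 1 ≤ n) (x : ℝ) (hx0 : 0 ≤ x) (hx1 : x < 1)
    (p : ℝ) (hp0 : 0 ≤ p) (hp1 : p ≤ 1) :
    ∑ i ∈ Finset.range (n + 1),
        binomPMF n p i ^ (1 - x) * binomPMF n ((i : ℝ) / n) i ^ x ≤
      1 / (1 - x) := by
  have hn' : (0 : ℝ) < n := by exact_mod_cast hn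
  calc ∑ i ∈ range (n + 1), binomPMF n p i ^ (1 - x) * binomPMF n ((i : ℝ) / n) i ^ x
      ≤ ∑ i ∈ range (n + 1), binomPMF n ((1 - x) * p + i * (x / n)) i := by
        refine sum_le_sum fun i hi ↦ ?_
        have hi : (i : ℝ) ≤ n := by exact_mod_cast Nat.lt_succ_iff.mp (mem_range.mp hi)
        rw [← mul_div_left_comm]
        exact binomPMF_rpow_mul_rpow_le (by linarith) hx0 (by ring) hp0 hp1 (by positivity)
          ((div_le_one hn').mpr hi) n i
    _ = abelSum (x / n) ((1 - x) * p) n ((1 - x) * (1 - p)) :=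
        sum_binomPMF_eq_abelSum (by field_simp; ring)
    _ = descFactorialSum (x / n) n (1 - x) := by
        rw [abelSum_eq_descFactorialSum]; congr 1; ring
    _ ≤ 1 / (1 - x) := descFactorialSum_div_le (by omega) hx0 hx1
end

section
/- There exists a universal constant C > 0 such that for every integer m ≥ 1, every positive integer n, every k ≥ 2, and every probability vector P on k letters, E[(2n·V_{n,k,P})^m] ≤ (C·m·(k-1))^m. -/
open Real Finset MeasureTheory

/-! Put `λᵢ = n pᵢ`. Since `x log (x / λ) = λ klFun (x / λ) + x - λ` and `∑ (xᵢ - λᵢ) = 0`,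
`2n KL(x/n ‖ p) = ∑ᵢ 2 λᵢ klFun (xᵢ / λᵢ)`, so by the power-mean inequality it suffices to bound the
`m`-th moment of each summand by `3 (4m)^m`. The generating function `E r^{xᵢ} = (1 + (r - 1) pᵢ)^n`
is at most `exp (λᵢ (r - 1))`, and Chernoff's bound with `r = a / λᵢ`, applied on each side of `λᵢ`,
gives the tail bound `P (λᵢ klFun (xᵢ / λᵢ) ≥ t) ≤ 2 exp (-t)`. Summing by parts against this tail,
`E exp (λᵢ klFun (xᵢ / λᵢ) / 2) ≤ 3`, and `y^m ≤ m^m exp y` converts this into the moment bound. -/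

open InformationTheory

lemma mul_klFun_div_eq {a lam : ℝ} (hlam : lam ≠ 0) :
    lam * klFun (a / lam) = a * log (a / lam) + lam - a := by
  rw [klFun_apply]; field_simp

lemma mul_klFun_div_nonneg {a lam : ℝ} (ha : 0 ≤ a) (hlam : 0 ≤ lam) : 0 ≤ lam * klFun (a / lam) :=
  mul_nonneg hlam (klFun_nonneg (div_nonneg ha hlam))

lemma exp_sub_exp_mul_exp_neg_two_mul_le {u v : ℝ} :
    (exp v - exp u) * exp (-2 * v) ≤ exp (-u) - exp (-v) := by
  have amgm := two_mul_le_add_sq (exp (-u / 2)) (exp (u / 2 - v))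
  simp only [mul_assoc, ← exp_add, ← exp_nat_mul] at amgm
  rw [sub_mul, ← exp_add, ← exp_add]
  ring_nf at amgm ⊢
  linarith

theorem sum_mul_exp_le_of_tail {ι : Type*} (s : Finset ι) {w v : ι → ℝ}
    (hw : ∀ x ∈ s, 0 ≤ w x) {c : ℝ} (hc : 0 ≤ c)
    (htail : ∀ t, ∑ x ∈ s with t ≤ v x, w x ≤ c * exp (-2 * t))
    {u : ℝ} (hu : ∀ x ∈ s, u ≤ v x) :
    ∑ x ∈ s, w x * exp (v x) ≤ exp u * ∑ x ∈ s, w x + c * exp (-u) := by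
  classical
  -- Summation by parts in increasing order of `v`: adding a new minimum `a` costs
  -- `(exp (v a) - exp u) * (mass of the set) ≤ c * (exp (-u) - exp (-v a))`, which telescopes.
  induction s using Finset.induction_on_min_value v generalizing u with
  | empty => simpa using by positivity
  | insert a s ha hmin ih =>
    have hs : ∑ x ∈ s, w x * exp (v x) ≤ exp (v a) * ∑ x ∈ s, w x + c * exp (-v a) := by
      refine ih (fun x hx => hw x (mem_insert_of_mem hx)) (fun t => (htail t).trans' ?_) hmin
      exact sum_le_sum_of_subset_of_nonneg (filter_subset_filter _ (subset_insert a s))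
        fun x hx _ => hw x (filter_subset _ _ hx)
    have hmass : w a + ∑ x ∈ s, w x ≤ c * exp (-2 * v a) := by
      have := htail (v a)
      rwa [filter_true_of_mem (by simpa using hmin), sum_insert ha] at this
    have hua : exp u ≤ exp (v a) := exp_le_exp.2 (hu a (mem_insert_self a s))
    have h1 := mul_le_mul_of_nonneg_left hmass (sub_nonneg.2 hua)
    have h2 := mul_le_mul_of_nonneg_left (exp_sub_exp_mul_exp_neg_two_mul_le (u := u) (v := v a)) hc
    rw [sum_insert ha, sum_insert ha]
    nlinarith

lemma pow_le_pow_mul_exp {y : ℝ} (hy : 0 ≤ y) (m : ℕ) : y ^ m ≤ m ^ m * exp y := by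
  rcases m.eq_zero_or_pos with rfl | hm
  · simpa using one_le_exp hy
  have hm' : (0 : ℝ) < m := by exact_mod_cast hm
  calc y ^ m = (m * (y / m)) ^ m := by field_simp
    _ ≤ (m * exp (y / m)) ^ m := by
        gcongr; linarith [add_one_le_exp (y / m), div_nonneg hy hm'.le]
    _ = m ^ m * exp y := by rw [mul_pow, ← exp_nat_mul]; field_simp

section PoissonTail

variable {ι : Type*} {s : Finset ι} {w : ι → ℝ} {X : ι → ℕ} {lam : ℝ}

theorem sum_le_exp_neg_mul_klFun_of_pow_le (hw : ∀ x ∈ s, 0 ≤ w x) (hlam : 0 < lam)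
    (hpgf : ∀ r, 0 ≤ r → ∑ x ∈ s, w x * r ^ X x ≤ exp (lam * (r - 1)))
    {J : Finset ι} (hJ : J ⊆ s) (a : ℕ) (ha : ∀ x ∈ J, ((a : ℝ) / lam) ^ a ≤ (a / lam) ^ X x) :
    ∑ x ∈ J, w x ≤ exp (-(lam * klFun (a / lam))) := by
  -- Markov's inequality for `r ^ X` with `r = a / lam`; `ha` says that `J` lies beyond `a` as seen
  -- from `lam`.
  set r : ℝ := a / lam with hr
  have hr0 : 0 ≤ r := by positivity
  have hra : r ^ a = exp (a * log r) := by
    rcases a.eq_zero_or_pos with rfl | ha0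
    · simp
    rw [exp_nat_mul, exp_log (by positivity)]
  have markov : exp (a * log r) * ∑ x ∈ J, w x ≤ exp (a - lam) := calc
    exp (a * log r) * ∑ x ∈ J, w x = ∑ x ∈ J, w x * r ^ a := by rw [mul_sum, hra]; simp [mul_comm]
    _ ≤ ∑ x ∈ J, w x * r ^ X x :=
        sum_le_sum fun x hx => mul_le_mul_of_nonneg_left (ha x hx) (hw x (hJ hx))
    _ ≤ ∑ x ∈ s, w x * r ^ X x := sum_le_sum_of_subset_of_nonneg hJ fun x hx _ => by
        have := hw x hx; positivity
    _ ≤ exp (lam * (r - 1)) := hpgf r hr0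
    _ = exp (a - lam) := by rw [hr]; field_simp
  rw [mul_klFun_div_eq hlam.ne', ← hr, neg_sub, sub_add_eq_sub_sub_swap, exp_sub]
  exact (le_div_iff₀' (exp_pos _)).2 markov

lemma sum_le_exp_neg_of_exists_pow_le (hw : ∀ x ∈ s, 0 ≤ w x) (hlam : 0 < lam)
    (hpgf : ∀ r, 0 ≤ r → ∑ x ∈ s, w x * r ^ X x ≤ exp (lam * (r - 1)))
    {J : Finset ι} (hJ : J ⊆ s) {t : ℝ} (hJt : ∀ x ∈ J, t ≤ lam * klFun (X x / lam))
    (hext : J.Nonempty → ∃ x₀ ∈ J, ∀ x ∈ J, ((X x₀ : ℝ) / lam) ^ X x₀ ≤ (X x₀ / lam) ^ X x) :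
    ∑ x ∈ J, w x ≤ exp (-t) := by
  obtain rfl | hne := J.eq_empty_or_nonempty
  · rw [sum_empty]; positivity
  obtain ⟨x₀, hx₀, hpow⟩ := hext hne
  exact (sum_le_exp_neg_mul_klFun_of_pow_le hw hlam hpgf hJ _ hpow).trans
    (exp_le_exp.2 (neg_le_neg (hJt x₀ hx₀)))

theorem sum_filter_le_mul_klFun_le (hw : ∀ x ∈ s, 0 ≤ w x) (hlam : 0 < lam)
    (hpgf : ∀ r, 0 ≤ r → ∑ x ∈ s, w x * r ^ X x ≤ exp (lam * (r - 1))) (t : ℝ) :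
    ∑ x ∈ s with t ≤ lam * klFun (X x / lam), w x ≤ 2 * exp (-t) := by
  set J := s.filter fun x => t ≤ lam * klFun (X x / lam)
  have hJs : ∀ q : ι → Prop, [DecidablePred q] → J.filter q ⊆ s :=
    fun q _ => (filter_subset _ _).trans (filter_subset _ _)
  have hJt : ∀ q : ι → Prop, [DecidablePred q] → ∀ x ∈ J.filter q, t ≤ lam * klFun (X x / lam) :=
    fun q _ x hx => (mem_filter.1 (mem_filter.1 hx).1).2
  rw [← sum_filter_add_sum_filter_not J fun x => (X x : ℝ) ≤ lam, two_mul]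
  refine add_le_add (sum_le_exp_neg_of_exists_pow_le hw hlam hpgf (hJs _) (hJt _) fun h => ?_)
    (sum_le_exp_neg_of_exists_pow_le hw hlam hpgf (hJs _) (hJt _) fun h => ?_)
  · obtain ⟨x₀, hx₀, hmax⟩ := exists_max_image _ X h
    exact ⟨x₀, hx₀, fun x hx => pow_le_pow_of_le_one (by positivity)
      (div_le_one_of_le₀ (mem_filter.1 hx₀).2 hlam.le) (hmax x hx)⟩
  · obtain ⟨x₀, hx₀, hmin⟩ := exists_min_image _ X h
    exact ⟨x₀, hx₀, fun x hx =>
      pow_le_pow_right₀ ((one_le_div hlam).2 (not_le.1 (mem_filter.1 hx₀).2).le) (hmin x hx)⟩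

theorem sum_mul_two_mul_klFun_pow_le (hw : ∀ x ∈ s, 0 ≤ w x) (hlam : 0 < lam)
    (hpgf : ∀ r, 0 ≤ r → ∑ x ∈ s, w x * r ^ X x ≤ exp (lam * (r - 1))) (m : ℕ) :
    ∑ x ∈ s, w x * (2 * (lam * klFun (X x / lam))) ^ m ≤ 3 * (4 * m) ^ m := by
  set V : ι → ℝ := fun x => lam * klFun (X x / lam)
  have hV (x : ι) : 0 ≤ V x / 2 :=
    div_nonneg (mul_klFun_div_nonneg (X x).cast_nonneg hlam.le) zero_le_two
  have hmass : ∑ x ∈ s, w x ≤ 1 := by simpa using hpgf 1 zero_le_one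
  have hexp : ∑ x ∈ s, w x * exp (V x / 2) ≤ 3 := by
    have htail (t : ℝ) : ∑ x ∈ s with t ≤ V x / 2, w x ≤ 2 * exp (-2 * t) := by
      simp_rw [le_div_iff₀ (two_pos : (0 : ℝ) < 2), mul_comm t, neg_mul]
      exact sum_filter_le_mul_klFun_le hw hlam hpgf (2 * t)
    have := sum_mul_exp_le_of_tail s hw zero_le_two htail (u := 0) fun x _ => hV x
    simp only [exp_zero, one_mul, neg_zero, mul_one] at this
    linarith
  calc ∑ x ∈ s, w x * (2 * V x) ^ m
      = 4 ^ m * ∑ x ∈ s, w x * (V x / 2) ^ m := by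
        rw [mul_sum]
        exact sum_congr rfl fun x _ => by rw [show 2 * V x = 4 * (V x / 2) by ring, mul_pow]; ring
    _ ≤ 4 ^ m * ∑ x ∈ s, w x * (m ^ m * exp (V x / 2)) := by
        gcongr with x hx
        exacts [hw x hx, pow_le_pow_mul_exp (hV x) m]
    _ = (4 * m) ^ m * ∑ x ∈ s, w x * exp (V x / 2) := by
        simp only [mul_sum, mul_pow]; exact sum_congr rfl fun x _ => by ring
    _ ≤ 3 * (4 * m) ^ m := by nlinarith [pow_nonneg (by positivity : (0 : ℝ) ≤ 4 * m) m]

end PoissonTail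

section Multinomial

variable {n k : ℕ}

lemma multSupport_eq_piAntidiag (n k : ℕ) : multSupport n k = piAntidiag univ n := by
  ext x
  simp only [multSupport, mem_filter, Fintype.mem_piFinset, mem_range, mem_piAntidiag,
    mem_univ, implies_true, and_true, and_iff_right_iff_imp]
  rintro rfl i
  exact Nat.lt_succ_of_le (single_le_sum (fun j _ => Nat.zero_le (x j)) (mem_univ i))

lemma multPMF_eq_multinomial_mul (q : Fin k → ℝ) {x : Fin k → ℕ} (hx : x ∈ multSupport n k) :
    multPMF n q x = Nat.multinomial univ x * ∏ i, q i ^ x i := by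
  have hsum : ∑ i, x i = n := (mem_filter.1 hx).2
  have hspec := congrArg (Nat.cast : ℕ → ℝ) (Nat.multinomial_spec univ x)
  push_cast [hsum] at hspec
  rw [multPMF, ← hspec, mul_div_cancel_left₀ _ (by positivity)]

lemma sum_multPMF (n k : ℕ) (q : Fin k → ℝ) :
    ∑ x ∈ multSupport n k, multPMF n q x = (∑ i, q i) ^ n := by
  rw [sum_pow_eq_sum_piAntidiag, ← multSupport_eq_piAntidiag]
  exact sum_congr rfl fun x hx => multPMF_eq_multinomial_mul q hx

lemma multPMF_mul_pow (p : Fin k → ℝ) (i : Fin k) (r : ℝ) (x : Fin k → ℕ) :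
    multPMF n p x * r ^ x i = multPMF n (fun j => if j = i then r * p j else p j) x := by
  have hq : ∀ j, (if j = i then r * p j else p j) ^ x j =
      (if j = i then r ^ x j else 1) * p j ^ x j :=
    fun j => by split_ifs <;> ring
  simp only [multPMF, hq, prod_mul_distrib, prod_ite_eq', mem_univ, if_true]
  ring

lemma sum_multPMF_mul_pow_le_exp {p : Fin k → ℝ} (hp0 : ∀ i, 0 ≤ p i) (hp1 : ∑ i, p i = 1)
    (i : Fin k) {r : ℝ} (hr : 0 ≤ r) :
    ∑ x ∈ multSupport n k, multPMF n p x * r ^ x i ≤ exp (n * p i * (r - 1)) := by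
  set q : Fin k → ℝ := fun j => if j = i then r * p j else p j
  have hq : ∑ j, q j = 1 + (r - 1) * p i := by
    have hqj : ∀ j, q j = p j + if j = i then (r - 1) * p i else 0 := fun j => by
      simp only [q]; split_ifs with h
      · rw [h]; ring
      · ring
    simp only [hqj, sum_add_distrib, sum_ite_eq', mem_univ, if_true, hp1]
  calc ∑ x ∈ multSupport n k, multPMF n p x * r ^ x i = (∑ j, q j) ^ n := by
        simp only [multPMF_mul_pow, sum_multPMF, q]
    _ ≤ exp ((r - 1) * p i) ^ n := by
        gcongr
        · exact sum_nonneg fun j _ => by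
            simp only [q]; split_ifs
            exacts [mul_nonneg hr (hp0 j), hp0 j]
        · rw [hq, add_comm]; exact add_one_le_exp _
    _ = exp (n * p i * (r - 1)) := by rw [← exp_nat_mul]; ring_nf

lemma multPMF_nonneg {p : Fin k → ℝ} (hp0 : ∀ i, 0 ≤ p i) (x : Fin k → ℕ) : 0 ≤ multPMF n p x := by
  unfold multPMF
  exact mul_nonneg (by positivity) (prod_nonneg fun i _ => pow_nonneg (hp0 i) _)

lemma multPMF_eq_zero {p : Fin k → ℝ} {x : Fin k → ℕ} {i : Fin k} (hpi : p i = 0) (hxi : x i ≠ 0) :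
    multPMF n p x = 0 :=
  mul_eq_zero_of_right _ (prod_eq_zero (mem_univ i) (by rw [hpi, zero_pow hxi]))

end Multinomial

lemma two_mul_mul_klVec_eq_sum_klFun {n k : ℕ} (hn : n ≠ 0) {p : Fin k → ℝ} (hp1 : ∑ i, p i = 1)
    {x : Fin k → ℕ} (hx : ∑ i, x i = n) (hpx : ∀ i, p i = 0 → x i = 0) :
    2 * (n : ℝ) * klVec (fun i => (x i : ℝ) / n) p =
      ∑ i, 2 * (n * p i * klFun (x i / (n * p i))) := by
  have hterm (i : Fin k) : 2 * n * (x i / n * log (x i / n / p i)) =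
      2 * (n * p i * klFun (x i / (n * p i))) + 2 * (x i - n * p i) := by
    by_cases hpi : p i = 0
    · simp [hpi, hpx i hpi]
    rw [mul_klFun_div_eq (by positivity), div_div]
    field_simp
    ring
  have hbal : ∑ i, 2 * ((x i : ℝ) - n * p i) = 0 := by
    rw [← mul_sum, sum_sub_distrib, ← mul_sum, hp1, ← Nat.cast_sum, hx]; ring
  rw [klVec, mul_sum, sum_congr rfl fun i _ => hterm i, sum_add_distrib, hbal, add_zero]

theorem sum_multPMF_mul_klFun_pow_le {n k m : ℕ} (hm : m ≠ 0) {p : Fin k → ℝ}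
    (hp0 : ∀ i, 0 ≤ p i) (hp1 : ∑ i, p i = 1) (i : Fin k) :
    ∑ x ∈ multSupport n k, multPMF n p x * (2 * (n * p i * klFun (x i / (n * p i)))) ^ m ≤
      3 * (4 * m) ^ m := by
  rcases (mul_nonneg n.cast_nonneg (hp0 i)).eq_or_lt with hlam | hlam
  · simp only [← hlam, zero_mul, mul_zero, zero_pow hm, sum_const_zero]; positivity
  exact sum_mul_two_mul_klFun_pow_le (fun x _ => multPMF_nonneg hp0 x) hlam
    (fun r hr => sum_multPMF_mul_pow_le_exp hp0 hp1 i hr) m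

theorem multPMF_mul_pow_klVec_le {n k m : ℕ} (hm : m ≠ 0) (hn : n ≠ 0) {p : Fin k → ℝ}
    (hp0 : ∀ i, 0 ≤ p i) (hp1 : ∑ i, p i = 1) {x : Fin k → ℕ} (hx : x ∈ multSupport n k) :
    multPMF n p x * (2 * (n : ℝ) * klVec (fun i => (x i : ℝ) / n) p) ^ m ≤
      multPMF n p x * ((k : ℝ) ^ (m - 1) * ∑ i, (2 * (n * p i * klFun (x i / (n * p i)))) ^ m) := by
  by_cases hw : multPMF n p x = 0
  · simp [hw]
  rw [two_mul_mul_klVec_eq_sum_klFun hn hp1 (mem_filter.1 hx).2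
    fun i hpi => by_contra fun hxi => hw (multPMF_eq_zero hpi hxi)]
  gcongr
  · exact multPMF_nonneg hp0 x
  have := pow_sum_le_card_mul_sum_pow (s := univ)
    (fun i _ => mul_nonneg zero_le_two (mul_klFun_div_nonneg (x i).cast_nonneg
      (mul_nonneg n.cast_nonneg (hp0 i)))) (m - 1)
  rwa [Nat.sub_add_cancel (Nat.one_le_iff_ne_zero.2 hm), card_univ, Fintype.card_fin] at this

theorem sum_multPMF_mul_pow_klVec_le {n k m : ℕ} (hm : m ≠ 0) (hn : n ≠ 0) {p : Fin k → ℝ}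
    (hp0 : ∀ i, 0 ≤ p i) (hp1 : ∑ i, p i = 1) :
    ∑ x ∈ multSupport n k, multPMF n p x * (2 * (n : ℝ) * klVec (fun i => (x i : ℝ) / n) p) ^ m ≤
      3 * (4 * m * k) ^ m := calc
  _ ≤ ∑ x ∈ multSupport n k, multPMF n p x *
        ((k : ℝ) ^ (m - 1) * ∑ i, (2 * (n * p i * klFun (x i / (n * p i)))) ^ m) :=
      sum_le_sum fun x hx => multPMF_mul_pow_klVec_le hm hn hp0 hp1 hx
  _ = (k : ℝ) ^ (m - 1) * ∑ i, ∑ x ∈ multSupport n k,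
        multPMF n p x * (2 * (n * p i * klFun (x i / (n * p i)))) ^ m := by
      simp only [mul_sum, mul_left_comm (multPMF n p _)]
      exact sum_comm
  _ ≤ (k : ℝ) ^ (m - 1) * ∑ _i : Fin k, (3 * (4 * m) ^ m : ℝ) := by
      gcongr with i; exact sum_multPMF_mul_klFun_pow_le hm hp0 hp1 i
  _ = 3 * (4 * m * k) ^ m := by
      rw [sum_const, card_univ, Fintype.card_fin, nsmul_eq_mul, mul_pow, ← mul_assoc,
        ← mul_assoc, ← pow_succ, Nat.sub_add_cancel (Nat.one_le_iff_ne_zero.2 hm)]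
      ring

theorem moment_bounds :
    ∃ C : ℝ, 0 < C ∧ ∀ (m n k : ℕ), 1 ≤ m → 1 ≤ n → 2 ≤ k →
      ∀ p : Fin k → ℝ, (∀ i, 0 ≤ p i) → (∑ i, p i = 1) →
        ∑ x ∈ multSupport n k, multPMF n p x *
            (2 * (n : ℝ) * klVec (fun i => (x i : ℝ) / n) p) ^ m ≤
          (C * m * ((k : ℝ) - 1)) ^ m := by
  refine ⟨24, by norm_num, fun m n k hm hn hk p hp0 hp1 => ?_⟩
  have hk' : (2 : ℝ) ≤ k := by exact_mod_cast hk
  calc _ ≤ 3 * (4 * m * k : ℝ) ^ m := sum_multPMF_mul_pow_klVec_le (by omega) (by omega) hp0 hp1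
    _ ≤ (3 * (4 * m * k : ℝ)) ^ m := by
        rw [mul_pow 3]; gcongr; exact le_self_pow₀ (by norm_num) (by omega)
    _ ≤ (24 * m * ((k : ℝ) - 1)) ^ m := by
        gcongr ?_ ^ m
        nlinarith [(Nat.cast_nonneg m : (0 : ℝ) ≤ m)]
end
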